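/- arXiv:2210.09717 — 10 statements merged into one kernel-verified Lean document; each statement's English description precedes it below -/
import Mathlib

section
/- For all real β and all θ ∈ (0,1), defining b₁ = 1 + (e^β − 1)(1−θ) and b₂ = 1/(1 + (e^{−β} − 1)(1−θ)), we have b₁ ≥ b₂ > 0, with b₁ = b₂ if and only if β = 0. -/
theorem b1_ge_b2_pos (β θ : ℝ) (hθ : θ ∈ Set.Ioo (0:ℝ) 1) :
    let b₁ := 1 + (Real.exp β - 1) * (1 - θ)
    let b₂ := 1 / (1 + (Real.exp (-β) - 1) * (1 - θ))
    b₁ ≥ b₂ ∧ b₂ > 0 ∧ (b₁ = b₂ ↔ β = 0) := by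
  intro b₁ b₂
  simp only [b₁, b₂]
  obtain ⟨hθ0, hθ1⟩ := hθ
  have hx : 0 < Real.exp β := Real.exp_pos β
  have hneg : Real.exp (-β) = (Real.exp β)⁻¹ := Real.exp_neg β
  have hxi : 0 < (Real.exp β)⁻¹ := inv_pos.2 hx
  have ht : 0 < 1 - θ := by linarith
  have hD : 0 < 1 + (Real.exp (-β) - 1) * (1 - θ) := by
    rw [hneg]
    nlinarith [mul_pos hxi ht]
  have hkey : (1 + (Real.exp β - 1) * (1 - θ)) * (1 + (Real.exp (-β) - 1) * (1 - θ)) - 1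
      = θ * (1 - θ) * (Real.exp β - 1) ^ 2 * (Real.exp β)⁻¹ := by
    rw [hneg]
    field_simp
    ring
  have hnn : 0 ≤ θ * (1 - θ) * (Real.exp β - 1) ^ 2 * (Real.exp β)⁻¹ :=
    mul_nonneg (mul_nonneg (mul_nonneg hθ0.le ht.le) (sq_nonneg _)) hxi.le
  have hge : 1 + (Real.exp β - 1) * (1 - θ) ≥ 1 / (1 + (Real.exp (-β) - 1) * (1 - θ)) := by
    rw [ge_iff_le, div_le_iff₀ hD]
    linarith
  refine ⟨hge, one_div_pos.2 hD, ?_, ?_⟩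
  · intro heq
    have h1 : (1 + (Real.exp β - 1) * (1 - θ)) * (1 + (Real.exp (-β) - 1) * (1 - θ)) = 1 := by
      rw [heq]
      field_simp
    have h0 : θ * (1 - θ) * (Real.exp β - 1) ^ 2 * (Real.exp β)⁻¹ = 0 := by linarith
    have hpos : 0 < θ * (1 - θ) * (Real.exp β)⁻¹ := mul_pos (mul_pos hθ0 ht) hxi
    have hsq : (Real.exp β - 1) ^ 2 = 0 := by nlinarith [sq_nonneg (Real.exp β - 1)]
    have hx1 : Real.exp β = 1 := by nlinarith
    simpa using hx1
  · intro hb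
    subst hb
    simp
end

section
/- Let α, β, γ ∈ ℝ, θ ∈ (0,1), b₁ = e^β(1−θ)+θ, b₂ = e^β/(e^βθ+1−θ), and δ = log(1 + e^α(b₁−b₂)(1−e^γ) / ((1+e^{α+γ}b₁)(1+e^α b₂))). Then the argument of the logarithm is strictly positive, so δ is well defined. -/
theorem log_arg_pos (α β γ θ : ℝ) (hθ : θ ∈ Set.Ioo (0:ℝ) 1) :
    let b₁ := Real.exp β * (1 - θ) + θ
    let b₂ := Real.exp β / (Real.exp β * θ + 1 - θ)
    0 < 1 + Real.exp α * (b₁ - b₂) * (1 - Real.exp γ) /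
        ((1 + Real.exp (α + γ) * b₁) * (1 + Real.exp α * b₂)) := by
  intro b₁ b₂
  obtain ⟨h0, h1⟩ := hθ
  have hE := Real.exp_pos β
  have hA := Real.exp_pos α
  have hG := Real.exp_pos γ
  have hb₁ : 0 < b₁ := by
    have : 0 < Real.exp β * (1 - θ) := mul_pos hE (by linarith)
    simp only [b₁]; linarith
  have hden : 0 < Real.exp β * θ + 1 - θ := by
    have : 0 < Real.exp β * θ := mul_pos hE h0
    linarith
  have hb₂ : 0 < b₂ := div_pos hE hden
  have hd1 : 0 < 1 + Real.exp (α + γ) * b₁ := by positivity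
  have hd2 : 0 < 1 + Real.exp α * b₂ := by positivity
  have hD : 0 < (1 + Real.exp (α + γ) * b₁) * (1 + Real.exp α * b₂) :=
    mul_pos hd1 hd2
  rw [show (1:ℝ) + Real.exp α * (b₁ - b₂) * (1 - Real.exp γ) /
        ((1 + Real.exp (α + γ) * b₁) * (1 + Real.exp α * b₂)) =
      ((1 + Real.exp (α + γ) * b₁) * (1 + Real.exp α * b₂) +
        Real.exp α * (b₁ - b₂) * (1 - Real.exp γ)) /
        ((1 + Real.exp (α + γ) * b₁) * (1 + Real.exp α * b₂)) from by
    field_simp]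
  apply div_pos _ hD
  have key : (1 + Real.exp (α + γ) * b₁) * (1 + Real.exp α * b₂) +
      Real.exp α * (b₁ - b₂) * (1 - Real.exp γ) =
      (1 + Real.exp α * b₁) * (1 + Real.exp (α + γ) * b₂) := by
    rw [Real.exp_add]; ring
  rw [key]
  positivity
end

section
/- With δ defined as δ = log(1 + e^α(b₁−b₂)(1−e^γ)/((1+e^{α+γ}b₁)(1+e^α b₂))), where b₁ = e^β(1−θ)+θ ≥ b₂ = e^β/(e^βθ+1−θ) > 0, α ∈ ℝ, θ ∈ (0,1): if γ > 0 then −γ < δ ≤ 0; if γ < 0 then 0 ≤ δ < −γ; and if γ = 0 then δ = 0. Consequently |γ + δ| ≤ |γ|. -/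
theorem bias_toward_zero (α β γ θ : ℝ) (hθ : θ ∈ Set.Ioo (0:ℝ) 1) :
    let b₁ := Real.exp β * (1 - θ) + θ
    let b₂ := Real.exp β / (Real.exp β * θ + 1 - θ)
    let δ := Real.log (1 + Real.exp α * (b₁ - b₂) * (1 - Real.exp γ) /
        ((1 + Real.exp (α + γ) * b₁) * (1 + Real.exp α * b₂)))
    (γ > 0 → -γ < δ ∧ δ ≤ 0) ∧
    (γ < 0 → 0 ≤ δ ∧ δ < -γ) ∧
    (γ = 0 → δ = 0) ∧
    |γ + δ| ≤ |γ| := by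
  obtain ⟨hθ0, hθ1⟩ := hθ
  intro b₁ b₂ δ
  have ht : 0 < Real.exp β := Real.exp_pos β
  have hE : 0 < Real.exp α := Real.exp_pos α
  have hg : 0 < Real.exp γ := Real.exp_pos γ
  have hd : 0 < Real.exp β * θ + 1 - θ := by nlinarith
  have hb2 : 0 < b₂ := div_pos ht hd
  have hb12 : b₂ ≤ b₁ := by
    show Real.exp β / (Real.exp β * θ + 1 - θ) ≤ Real.exp β * (1 - θ) + θ
    rw [div_le_iff₀ hd]
    nlinarith [sq_nonneg (Real.exp β - 1), mul_pos hθ0 (by linarith : (0:ℝ) < 1 - θ)]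
  have hb1 : 0 < b₁ := lt_of_lt_of_le hb2 hb12
  set E := Real.exp α with hEdef
  set g := Real.exp γ with hgdef
  have hD1 : 0 < 1 + E * g * b₁ := by positivity
  have hD2 : 0 < 1 + E * b₂ := by positivity
  have hN1 : 0 < 1 + E * b₁ := by positivity
  have hN2 : 0 < 1 + E * g * b₂ := by positivity
  have hX : 0 < ((1 + E * b₁) * (1 + E * g * b₂)) / ((1 + E * g * b₁) * (1 + E * b₂)) := by
    positivity
  have hδ : δ = Real.log (((1 + E * b₁) * (1 + E * g * b₂)) /
      ((1 + E * g * b₁) * (1 + E * b₂))) := by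
    show Real.log (1 + E * (b₁ - b₂) * (1 - g) /
        ((1 + Real.exp (α + γ) * b₁) * (1 + E * b₂))) = _
    rw [Real.exp_add, ← hEdef, ← hgdef]
    congr 1
    field_simp
    ring
  have hlg : Real.log g = γ := by rw [hgdef, Real.log_exp]
  have hsum : γ + δ = Real.log (g * (((1 + E * b₁) * (1 + E * g * b₂)) /
      ((1 + E * g * b₁) * (1 + E * b₂)))) := by
    rw [Real.log_mul (ne_of_gt hg) (ne_of_gt hX), hlg, hδ]
  have hid : (1 + E * g * b₁) * (1 + E * b₂) - (1 + E * b₁) * (1 + E * g * b₂)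
      = E * (g - 1) * (b₁ - b₂) := by ring
  have hid2 : g * ((1 + E * b₁) * (1 + E * g * b₂)) - (1 + E * g * b₁) * (1 + E * b₂)
      = (g - 1) * (1 + E * b₂ * (g + 1) + E * E * g * b₁ * b₂) := by ring
  have hfac : 0 < 1 + E * b₂ * (g + 1) + E * E * g * b₁ * b₂ := by
    nlinarith [mul_pos (mul_pos hE hb2) hg, mul_pos hE hb2,
      mul_pos (mul_pos (mul_pos (mul_pos hE hE) hg) hb1) hb2]
  have hpos : γ > 0 → -γ < δ ∧ δ ≤ 0 := by
    intro h
    have hg1 : 1 < g := by rw [hgdef, ← Real.exp_zero]; exact Real.exp_lt_exp.2 h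
    constructor
    · have h1 : (1 + E * g * b₁) * (1 + E * b₂)
          < g * ((1 + E * b₁) * (1 + E * g * b₂)) := by
        nlinarith [mul_pos (sub_pos.2 hg1) hfac]
      have h2 : 1 < g * (((1 + E * b₁) * (1 + E * g * b₂)) /
          ((1 + E * g * b₁) * (1 + E * b₂))) := by
        rw [mul_div_assoc', one_lt_div (by positivity)]
        exact h1
      have := Real.log_pos h2
      rw [← hsum] at this
      linarith
    · rw [hδ]
      apply Real.log_nonpos (le_of_lt hX)
      rw [div_le_one (by positivity)]
      have h3 : 0 ≤ E * (g - 1) * (b₁ - b₂) :=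
        mul_nonneg (mul_nonneg hE.le (by linarith)) (by linarith)
      linarith
  have hneg : γ < 0 → 0 ≤ δ ∧ δ < -γ := by
    intro h
    have hg1 : g < 1 := by rw [hgdef, ← Real.exp_zero]; exact Real.exp_lt_exp.2 h
    constructor
    · rw [hδ]
      apply Real.log_nonneg
      rw [le_div_iff₀ (by positivity), one_mul]
      have h3 : E * (g - 1) * (b₁ - b₂) ≤ 0 :=
        mul_nonpos_of_nonpos_of_nonneg
          (mul_nonpos_of_nonneg_of_nonpos hE.le (by linarith)) (by linarith)
      linarith
    · have h1 : g * ((1 + E * b₁) * (1 + E * g * b₂))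
          < (1 + E * g * b₁) * (1 + E * b₂) := by
        nlinarith [mul_pos (sub_pos.2 (by linarith : (0:ℝ) < 1 - g)) hfac]
      have h2 : g * (((1 + E * b₁) * (1 + E * g * b₂)) /
          ((1 + E * g * b₁) * (1 + E * b₂))) < 1 := by
        rw [mul_div_assoc', div_lt_one (by positivity)]
        exact h1
      have := Real.log_neg (by positivity) h2
      rw [← hsum] at this
      linarith
  have hzero : γ = 0 → δ = 0 := by
    intro h
    have hg0 : g = 1 := by rw [hgdef, h, Real.exp_zero]
    rw [hδ, hg0, mul_one, div_self (ne_of_gt (by positivity)), Real.log_one]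
  refine ⟨hpos, hneg, hzero, ?_⟩
  rcases lt_trichotomy γ 0 with h | h | h
  · obtain ⟨h1, h2⟩ := hneg h
    rw [abs_of_neg (by linarith), abs_of_neg h]
    linarith
  · rw [hzero h, h]
    simp
  · obtain ⟨h1, h2⟩ := hpos h
    rw [abs_of_pos (by linarith), abs_of_pos h]
    linarith
end

section
/- Fix β, γ, θ with γ ≠ 0 and β ≠ 0, θ ∈ (0,1). As a function of α, the absolute bias |δ(α)| with δ(α) = log(1 + e^α(b₁−b₂)(1−e^γ)/((1+e^{α+γ}b₁)(1+e^α b₂))) is maximized (in absolute value) at α* = −(log(b₁b₂) + γ)/2, i.e., the derivative of δ with respect to α vanishes at α*. -/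
/-!
Since `exp (2 α*) = exp (-γ) / (b₁ b₂)`, the reflection `α ↦ 2 α* - α` sends `u = exp α` to
`1 / (u e^γ b₁ b₂)`, and this substitution leaves the rational function inside the logarithm
unchanged. So `δ` is symmetric about `α*`, and the derivative of a function symmetric about a
point vanishes there (trivially so where it is not differentiable, `deriv` being `0`).
-/

open Real

lemma deriv_eq_zero_of_forall_comp_const_sub_eq {𝕜 F : Type*} [NontriviallyNormedField 𝕜]
    [NormedAddCommGroup F] [NormedSpace 𝕜 F] [IsAddTorsionFree F] {f : 𝕜 → F} {m : 𝕜}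
    (hf : ∀ x, f (2 * m - x) = f x) : deriv f m = 0 := by
  have h := deriv_comp_const_sub f (2 * m) m
  rw [funext hf, show 2 * m - m = m by ring] at h
  exact self_eq_neg.mp h

/-- The reflection `u ↦ 1 / (u c b₁ b₂)` swaps the two factors of the denominator. -/
lemma div_mul_one_add_mul_eq_of_mul_eq_one {b₁ b₂ c u v : ℝ} (hb₁ : 0 < b₁) (hb₂ : 0 < b₂)
    (hc : 0 < c) (hu : 0 < u) (huv : u * v * c * b₁ * b₂ = 1) :
    v * (b₁ - b₂) * (1 - c) / ((1 + v * c * b₁) * (1 + v * b₂)) =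
      u * (b₁ - b₂) * (1 - c) / ((1 + u * c * b₁) * (1 + u * b₂)) := by
  have hv : v = 1 / (u * c * b₁ * b₂) := by
    field_simp
    linarith
  subst hv
  field_simp
  ring

theorem bias_critical_point_general (β γ θ : ℝ)
    (hθ : θ ∈ Set.Ioo (0:ℝ) 1) :
    let b₁ := Real.exp β * (1 - θ) + θ
    let b₂ := Real.exp β / (Real.exp β * θ + 1 - θ)
    let δ : ℝ → ℝ := fun a => Real.log (1 + Real.exp a * (b₁ - b₂) * (1 - Real.exp γ) /
        ((1 + Real.exp (a + γ) * b₁) * (1 + Real.exp a * b₂)))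
    deriv δ (-(Real.log (b₁ * b₂) + γ) / 2) = 0 := by
  intro b₁ b₂ δ
  obtain ⟨hθ₀, hθ₁⟩ := hθ
  have hb₁ : 0 < b₁ := by positivity [sub_pos.mpr hθ₁]
  have hb₂ : 0 < b₂ := div_pos (exp_pos β) (by nlinarith [exp_pos β])
  apply deriv_eq_zero_of_forall_comp_const_sub_eq
  intro a
  simp only [δ, exp_add]
  congr 2
  apply div_mul_one_add_mul_eq_of_mul_eq_one hb₁ hb₂ (exp_pos γ) (exp_pos a)
  have hexponent : a + (2 * (-(log (b₁ * b₂) + γ) / 2) - a) + γ = -log (b₁ * b₂) := by ring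
  rw [← exp_add, ← exp_add, hexponent, exp_neg, exp_log (mul_pos hb₁ hb₂)]
  field_simp

theorem bias_critical_point (β γ θ : ℝ) (hβ : β ≠ 0) (hγ : γ ≠ 0)
    (hθ : θ ∈ Set.Ioo (0:ℝ) 1) :
    let b₁ := Real.exp β * (1 - θ) + θ
    let b₂ := Real.exp β / (Real.exp β * θ + 1 - θ)
    let δ : ℝ → ℝ := fun a => Real.log (1 + Real.exp a * (b₁ - b₂) * (1 - Real.exp γ) /
        ((1 + Real.exp (a + γ) * b₁) * (1 + Real.exp a * b₂)))
    deriv δ (-(Real.log (b₁ * b₂) + γ) / 2) = 0 :=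
  bias_critical_point_general β γ θ hθ
end

section
/- Let ν > 0, θ ∈ (0,1), β ∈ ℝ, and set τ = −θ(1−θ)(e^β−1)² · [ (1+1/ν)((θ(e^β−1)+1)² + e^βν) + 2(1 + (e^{2β}−1)θ) ] / (θ(e^β−1)+1)². Then τ ≤ 0, and τ = 0 if and only if β = 0. -/
theorem tau_nonpos (ν θ β : ℝ) (hν : 0 < ν) (hθ : θ ∈ Set.Ioo (0:ℝ) 1) :
    let τ := -(θ * (1 - θ) * (Real.exp β - 1) ^ 2 *
        ((1 + 1 / ν) * ((θ * (Real.exp β - 1) + 1) ^ 2 + Real.exp β * ν) +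
          2 * (1 + (Real.exp (2 * β) - 1) * θ)) /
        (θ * (Real.exp β - 1) + 1) ^ 2)
    τ ≤ 0 ∧ (τ = 0 ↔ β = 0) := by
  obtain ⟨hθ0, hθ1⟩ := hθ
  intro τ
  have hE : 0 < Real.exp β := Real.exp_pos β
  have hE2 : 0 < Real.exp (2 * β) := Real.exp_pos _
  have hD : 0 < θ * (Real.exp β - 1) + 1 := by nlinarith
  have h2 : 0 < 1 + (Real.exp (2 * β) - 1) * θ := by nlinarith
  have hB : 0 < (1 + 1 / ν) * ((θ * (Real.exp β - 1) + 1) ^ 2 + Real.exp β * ν) +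
      2 * (1 + (Real.exp (2 * β) - 1) * θ) := by
    have h1 : (1:ℝ) < 1 + 1 / ν := by
      have := one_div_pos.mpr hν; linarith
    nlinarith [sq_nonneg (θ * (Real.exp β - 1) + 1), mul_pos hE hν]
  have hc : 0 < θ * (1 - θ) := by nlinarith
  have hnum : 0 ≤ θ * (1 - θ) * (Real.exp β - 1) ^ 2 *
      ((1 + 1 / ν) * ((θ * (Real.exp β - 1) + 1) ^ 2 + Real.exp β * ν) +
        2 * (1 + (Real.exp (2 * β) - 1) * θ)) :=
    mul_nonneg (mul_nonneg hc.le (sq_nonneg _)) hB.le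
  have hDsq : 0 < (θ * (Real.exp β - 1) + 1) ^ 2 := by positivity
  constructor
  · have : 0 ≤ θ * (1 - θ) * (Real.exp β - 1) ^ 2 *
        ((1 + 1 / ν) * ((θ * (Real.exp β - 1) + 1) ^ 2 + Real.exp β * ν) +
          2 * (1 + (Real.exp (2 * β) - 1) * θ)) /
        (θ * (Real.exp β - 1) + 1) ^ 2 := div_nonneg hnum hDsq.le
    simp only [τ]
    linarith
  · constructor
    · intro h
      simp only [τ, neg_eq_zero, div_eq_zero_iff] at h
      rcases h with h | h
      · have h3 : (Real.exp β - 1) ^ 2 = 0 := by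
          rcases mul_eq_zero.mp h with h | h
          · rcases mul_eq_zero.mp h with h | h
            · exact absurd h hc.ne'
            · exact h
          · exact absurd h hB.ne'
        have : Real.exp β = 1 := by nlinarith [sq_nonneg (Real.exp β - 1)]
        exact Real.exp_injective (by rw [this, Real.exp_zero])
      · exact absurd h hDsq.ne'
    · intro h
      simp only [τ, h, Real.exp_zero]
      ring
end

section
/- For β ∈ ℝ, θ ∈ (0,1), ρ > 0, with b₁ = e^β(1−θ)+θ and b₂ = e^β/(e^βθ+1−θ), the quantity g(ρ) = (b₁b₂ρ² + 2b₂ρ + 1)/(b₁b₂ρ² + (b₁+b₂)ρ + 1) satisfies 0 < g(ρ) ≤ 1, with g(ρ) = 1 if and only if β = 0. -/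
theorem attenuation_factor_bounds (β θ ρ : ℝ) (hθ : θ ∈ Set.Ioo (0:ℝ) 1) (hρ : 0 < ρ) :
    let b₁ := Real.exp β * (1 - θ) + θ
    let b₂ := Real.exp β / (Real.exp β * θ + 1 - θ)
    let g := (b₁ * b₂ * ρ ^ 2 + 2 * b₂ * ρ + 1) /
        (b₁ * b₂ * ρ ^ 2 + (b₁ + b₂) * ρ + 1)
    0 < g ∧ g ≤ 1 ∧ (g = 1 ↔ β = 0) := by
  obtain ⟨hθ0, hθ1⟩ := hθ
  intro b₁ b₂ g
  have hb1d : b₁ = Real.exp β * (1 - θ) + θ := rfl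
  have hb2d : b₂ = Real.exp β / (Real.exp β * θ + 1 - θ) := rfl
  have hgd : g = (b₁ * b₂ * ρ ^ 2 + 2 * b₂ * ρ + 1) /
      (b₁ * b₂ * ρ ^ 2 + (b₁ + b₂) * ρ + 1) := rfl
  clear_value b₁ b₂ g
  have hx : 0 < Real.exp β := Real.exp_pos β
  have hD : 0 < Real.exp β * θ + 1 - θ := by nlinarith
  have hb₁ : 0 < b₁ := by rw [hb1d]; nlinarith
  have hb₂ : 0 < b₂ := hb2d ▸ div_pos hx hD
  have hden : 0 < b₁ * b₂ * ρ ^ 2 + (b₁ + b₂) * ρ + 1 := by positivity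
  have hnum : 0 < b₁ * b₂ * ρ ^ 2 + 2 * b₂ * ρ + 1 := by positivity
  have hkey : b₁ * (Real.exp β * θ + 1 - θ) - Real.exp β
      = θ * (1 - θ) * (Real.exp β - 1) ^ 2 := by rw [hb1d]; ring
  have hb2D : b₂ * (Real.exp β * θ + 1 - θ) = Real.exp β := by
    rw [hb2d]; exact div_mul_cancel₀ _ (ne_of_gt hD)
  have hp0 : 0 < θ * (1 - θ) := by nlinarith
  have hsqpos : 0 ≤ θ * (1 - θ) * (Real.exp β - 1) ^ 2 := mul_nonneg hp0.le (sq_nonneg _)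
  have hb21 : b₂ ≤ b₁ := by
    rw [hb2d, div_le_iff₀ hD]
    linarith [hkey]
  rw [hgd]
  refine ⟨div_pos hnum hden, ?_, ?_⟩
  · rw [div_le_one hden]; nlinarith
  · rw [div_eq_one_iff_eq (ne_of_gt hden)]
    constructor
    · intro h
      have h2 : (b₁ - b₂) * ρ = 0 := by linear_combination -h
      have hb : b₁ = b₂ := by
        rcases mul_eq_zero.mp h2 with h3 | h3
        · linarith
        · exact absurd h3 (ne_of_gt hρ)
      have hz : θ * (1 - θ) * (Real.exp β - 1) ^ 2 = 0 := by
        rw [← hkey, hb, hb2D]; ring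
      have hp : 0 < θ * (1 - θ) := by nlinarith
      have hsq : (Real.exp β - 1) ^ 2 = 0 :=
        (mul_eq_zero.mp hz).resolve_left (ne_of_gt hp)
      have h1 : Real.exp β = 1 := by
        have := pow_eq_zero_iff (n := 2) (by norm_num) |>.mp hsq
        linarith
      exact Real.exp_injective (by rw [h1, Real.exp_zero])
    · intro h
      subst h
      rw [hb1d, hb2d, Real.exp_zero]
      have : (1:ℝ) * θ + 1 - θ = 1 := by ring
      rw [this]
      ring
end

section
/- Let p₁, p₀ ∈ (0,1) be defined by p_j = θ·e^{α+β+γj}/(1+e^{α+β+γj}) + (1−θ)·e^{α+γj}/(1+e^{α+γj}) for j = 0,1, with θ ∈ (0,1). Then log(p₁(1−p₀)/(p₀(1−p₁))) = γ + log(1 + e^α(b₁−b₂)(1−e^γ)/((1+e^{α+γ}b₁)(1+e^α b₂))), where b₁ = e^β(1−θ)+θ and b₂ = e^β/(e^βθ+1−θ). -/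
/-!
Writing `a = e^{α+γj}` and `b = e^β`, clearing the denominators `(1 + ab)(1 + a)` shows that the
odds of `p_j` are `a c (1 + a b₂) / (1 + a b₁)` with `c = bθ + 1 - θ`. In the odds ratio the
common factors cancel, leaving `e^γ (1 + e^{α+γ} b₂)(1 + e^α b₁) / ((1 + e^{α+γ} b₁)(1 + e^α b₂))`,
and the last quotient is `1 + e^α (b₁ - b₂)(1 - e^γ) / ((1 + e^{α+γ} b₁)(1 + e^α b₂))`.
-/

section Field

variable {K : Type*} [Field K]

def odds (q : K) : K := q / (1 - q)

/-- `θ σ(x + β) + (1 - θ) σ(x)` for the logistic function `σ`, written with `a = e^x`, `b = e^β`. -/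
def logisticMixture (θ b a : K) : K :=
  θ * (a * b / (1 + a * b)) + (1 - θ) * (a / (1 + a))

theorem one_sub_logisticMixture (θ b a : K) (hab : 1 + a * b ≠ 0) (ha : 1 + a ≠ 0) :
    1 - logisticMixture θ b a = (1 + a * (b * (1 - θ) + θ)) / ((1 + a * b) * (1 + a)) := by
  unfold logisticMixture
  field_simp
  ring

theorem odds_logisticMixture (θ b a : K) (hab : 1 + a * b ≠ 0) (ha : 1 + a ≠ 0)
    (hc : b * θ + 1 - θ ≠ 0) :
    odds (logisticMixture θ b a) =
      a * (b * θ + 1 - θ) * (1 + a * (b / (b * θ + 1 - θ))) / (1 + a * (b * (1 - θ) + θ)) := by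
  have hq : logisticMixture θ b a = a * (b * θ + 1 - θ + a * b) / ((1 + a * b) * (1 + a)) := by
    unfold logisticMixture
    field_simp
    ring
  have hc' : (b * θ + 1 - θ) * (1 + a * (b / (b * θ + 1 - θ))) = b * θ + 1 - θ + a * b := by
    rw [mul_add, mul_one, mul_left_comm, mul_div_cancel₀ _ hc]
  rw [odds, one_sub_logisticMixture θ b a hab ha, hq,
    div_div_div_cancel_right₀ (mul_ne_zero hab ha), mul_assoc a, hc']

theorem one_add_mul_sub_mul_one_sub_div (a g u v : K) (hu : 1 + a * g * u ≠ 0)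
    (hv : 1 + a * v ≠ 0) :
    1 + a * (u - v) * (1 - g) / ((1 + a * g * u) * (1 + a * v)) =
      (1 + a * g * v) * (1 + a * u) / ((1 + a * g * u) * (1 + a * v)) := by
  rw [eq_div_iff (mul_ne_zero hu hv), add_mul, div_mul_cancel₀ _ (mul_ne_zero hu hv)]
  ring

end Field

theorem odds_logisticMixture_mul_div (θ a b g : ℝ) (hθ : θ ∈ Set.Icc (0 : ℝ) 1)
    (ha : 0 < a) (hb : 0 < b) (hg : 0 < g) :
    odds (logisticMixture θ b (a * g)) / odds (logisticMixture θ b a) =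
      g * ((1 + a * g * (b / (b * θ + 1 - θ))) * (1 + a * (b * (1 - θ) + θ)) /
        ((1 + a * g * (b * (1 - θ) + θ)) * (1 + a * (b / (b * θ + 1 - θ))))) := by
  obtain ⟨hθ₀, hθ₁⟩ := hθ
  have hc : 0 < b * θ + 1 - θ := by
    nlinarith [mul_nonneg hb.le hθ₀, mul_nonneg (mul_nonneg hb.le hθ₀) (sub_nonneg.2 hθ₁)]
  have hb₁ : 0 < b * (1 - θ) + θ := by
    nlinarith [mul_nonneg hb.le hθ₀, mul_nonneg (mul_nonneg hb.le hθ₀) (sub_nonneg.2 hθ₁)]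
  rw [odds_logisticMixture θ b a (by positivity) (by positivity) hc.ne',
    odds_logisticMixture θ b (a * g) (by positivity) (by positivity) hc.ne']
  field_simp

theorem marginal_log_odds_ratio (α β γ θ : ℝ) (hθ : θ ∈ Set.Ioo (0:ℝ) 1) :
    let p : ℝ → ℝ := fun j =>
      θ * (Real.exp (α + β + γ * j) / (1 + Real.exp (α + β + γ * j))) +
        (1 - θ) * (Real.exp (α + γ * j) / (1 + Real.exp (α + γ * j)))
    let b₁ := Real.exp β * (1 - θ) + θ
    let b₂ := Real.exp β / (Real.exp β * θ + 1 - θ)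
    Real.log (p 1 * (1 - p 0) / (p 0 * (1 - p 1))) =
      γ + Real.log (1 + Real.exp α * (b₁ - b₂) * (1 - Real.exp γ) /
        ((1 + Real.exp (α + γ) * b₁) * (1 + Real.exp α * b₂))) := by
  intro p b₁ b₂
  obtain ⟨hθ₀, hθ₁⟩ := hθ
  have hb₁ : 0 < b₁ := by have := Real.exp_pos β; nlinarith
  have hb₂ : 0 < b₂ := div_pos (Real.exp_pos β) (by nlinarith [Real.exp_pos β])
  have hp₁ : p 1 = logisticMixture θ (Real.exp β) (Real.exp α * Real.exp γ) := by
    simp only [p, logisticMixture, mul_one, Real.exp_add]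
    ring_nf
  have hp₀ : p 0 = logisticMixture θ (Real.exp β) (Real.exp α) := by
    simp only [p, logisticMixture, mul_zero, Real.exp_add, Real.exp_zero, mul_one]
  have hcross : p 1 * (1 - p 0) / (p 0 * (1 - p 1)) = odds (p 1) / odds (p 0) := by
    rw [odds, odds, div_div_div_eq, mul_comm (1 - p 1)]
  rw [hcross, hp₁, hp₀, odds_logisticMixture_mul_div θ _ _ _ ⟨hθ₀.le, hθ₁.le⟩ (Real.exp_pos α)
    (Real.exp_pos β) (Real.exp_pos γ), Real.exp_add,
    one_add_mul_sub_mul_one_sub_div _ _ _ _ (by positivity) (by positivity),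
    Real.log_mul (Real.exp_pos γ).ne' (by positivity), Real.log_exp]
end

section
/- As α → −∞ (ρ = e^α → 0), the quantity λ (from the previous context, with φ = √((1+e^{α+β})/(1+e^α))) converges to λ₀ = 1 + [νθ(1−θ)/(1+ν)]·(1−e^β)²/((1−θ+e^βθ)² + νe^β), and in fact λ = λ₀ + O(ρ). -/
theorem lambda_rare_limit (ν θ β : ℝ) (hν : 0 < ν) (hθ : θ ∈ Set.Ioo (0:ℝ) 1) :
    let φ : ℝ → ℝ := fun ρ => Real.sqrt ((1 + ρ * Real.exp β) / (1 + ρ))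
    let lam : ℝ → ℝ := fun ρ => 1 + (ν * θ * (1 - θ) / (1 + ν)) *
        ((1 - Real.exp β) ^ 2 /
          (((1 - θ) * φ ρ + Real.exp β * θ * (φ ρ)⁻¹) ^ 2 +
            ν * Real.exp β * ((1 - θ) * φ ρ + θ * (φ ρ)⁻¹) ^ 2))
    let lam0 := 1 + (ν * θ * (1 - θ) / (1 + ν)) *
        ((1 - Real.exp β) ^ 2 / ((1 - θ + Real.exp β * θ) ^ 2 + ν * Real.exp β))
    Filter.Tendsto lam (nhdsWithin 0 (Set.Ioi 0)) (nhds lam0) ∧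
    (fun ρ : ℝ => lam ρ - lam0) =O[nhdsWithin 0 (Set.Ioi 0)] (fun ρ : ℝ => ρ) := by
  intro φ lam lam0
  have eβ := Real.exp_pos β
  have hg : DifferentiableAt ℝ (fun ρ : ℝ => (1 + ρ * Real.exp β) / (1 + ρ)) 0 := by
    apply DifferentiableAt.div
    · fun_prop
    · fun_prop
    · norm_num
  have hgne : (1 + (0:ℝ) * Real.exp β) / (1 + 0) ≠ 0 := by norm_num
  have hφ : DifferentiableAt ℝ φ 0 := hg.sqrt hgne
  have hφ0 : φ 0 = 1 := by
    show Real.sqrt ((1 + 0 * Real.exp β) / (1 + 0)) = 1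
    norm_num
  have hφne : φ 0 ≠ 0 := by rw [hφ0]; norm_num
  have hφinv : DifferentiableAt ℝ (fun ρ => (φ ρ)⁻¹) 0 := hφ.inv hφne
  have hl : DifferentiableAt ℝ (fun ρ => (1 - θ) * φ ρ + Real.exp β * θ * (φ ρ)⁻¹) 0 :=
    ((differentiableAt_const _).mul hφ).add ((differentiableAt_const _).mul hφinv)
  have hr : DifferentiableAt ℝ (fun ρ => (1 - θ) * φ ρ + θ * (φ ρ)⁻¹) 0 :=
    ((differentiableAt_const _).mul hφ).add ((differentiableAt_const _).mul hφinv)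
  have hDdiff : DifferentiableAt ℝ (fun ρ =>
      ((1 - θ) * φ ρ + Real.exp β * θ * (φ ρ)⁻¹) ^ 2 +
        ν * Real.exp β * ((1 - θ) * φ ρ + θ * (φ ρ)⁻¹) ^ 2) 0 :=
    (hl.pow 2).add ((differentiableAt_const _).mul (hr.pow 2))
  have hD0 : ((1 - θ) * φ 0 + Real.exp β * θ * (φ 0)⁻¹) ^ 2 +
      ν * Real.exp β * ((1 - θ) * φ 0 + θ * (φ 0)⁻¹) ^ 2
      = (1 - θ + Real.exp β * θ) ^ 2 + ν * Real.exp β := by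
    rw [hφ0]; ring_nf
  have hD0ne : ((1 - θ) * φ 0 + Real.exp β * θ * (φ 0)⁻¹) ^ 2 +
      ν * Real.exp β * ((1 - θ) * φ 0 + θ * (φ 0)⁻¹) ^ 2 ≠ 0 := by
    rw [hD0]; positivity
  have hlam : DifferentiableAt ℝ lam 0 :=
    (differentiableAt_const _).add ((differentiableAt_const _).mul
      ((differentiableAt_const _).div hDdiff hD0ne))
  have hlam0 : lam 0 = lam0 := by
    show 1 + (ν * θ * (1 - θ) / (1 + ν)) *
        ((1 - Real.exp β) ^ 2 /
          (((1 - θ) * φ 0 + Real.exp β * θ * (φ 0)⁻¹) ^ 2 +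
            ν * Real.exp β * ((1 - θ) * φ 0 + θ * (φ 0)⁻¹) ^ 2)) = lam0
    rw [hD0]
  constructor
  · have h := hlam.continuousAt.tendsto
    rw [hlam0] at h
    exact h.mono_left nhdsWithin_le_nhds
  · have h := hlam.isBigO_sub
    rw [hlam0] at h
    simpa using h.mono nhdsWithin_le_nhds
end

section
/- With F as above and f = F(ρ,s), the prevalence can be written as f = ρ/(1+ρ) · C′(ρ,s) and 1−f = 1/(1+ρ) · C″(ρ,s), where C′(ρ,s) = (1+ρ)e^{β+γ}θπ/(1+ρe^{β+γ}) + (1+ρ)e^βθ(1−π)/(1+ρe^β) + (1+ρ)e^γ(1−θ)π/(1+ρe^γ) + (1−θ)(1−π), and C″(ρ,s) = (1+ρ)θπ/(1+ρe^{β+γ}) + (1+ρ)θ(1−π)/(1+ρe^β) + (1+ρ)(1−θ)π/(1+ρe^γ) + (1−θ)(1−π). Moreover min{e^{β+γ},e^β,e^γ,1} ≤ C′(ρ,s) ≤ max{e^{β+γ},e^β,e^γ,1} and min{e^{−β−γ},e^{−β},e^{−γ},1} ≤ C″(ρ,s) ≤ max{e^{−β−γ},e^{−β},e^{−γ},1}.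 -/
set_option maxHeartbeats 1600000

lemma ratio_bounds (ρ t : ℝ) (hρ : 0 < ρ) (ht : 0 < t) :
    min t 1 ≤ (1 + ρ) * t / (1 + ρ * t) ∧ (1 + ρ) * t / (1 + ρ * t) ≤ max t 1 := by
  have hd : 0 < 1 + ρ * t := by positivity
  constructor
  · rcases le_total t 1 with h | h
    · rw [min_eq_left h, le_div_iff₀ hd]
      nlinarith [mul_nonneg (mul_nonneg hρ.le ht.le) (sub_nonneg.2 h)]
    · rw [min_eq_right h, le_div_iff₀ hd]; nlinarith
  · rcases le_total t 1 with h | h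
    · rw [max_eq_right h, div_le_iff₀ hd]; nlinarith
    · rw [max_eq_left h, div_le_iff₀ hd]
      nlinarith [mul_nonneg (mul_nonneg hρ.le ht.le) (sub_nonneg.2 h)]

lemma ratio_bounds' (ρ t : ℝ) (hρ : 0 < ρ) (ht : 0 < t) :
    min (1 / t) 1 ≤ (1 + ρ) / (1 + ρ * t) ∧ (1 + ρ) / (1 + ρ * t) ≤ max (1 / t) 1 := by
  have hd : 0 < 1 + ρ * t := by positivity
  constructor
  · rcases le_total t 1 with h | h
    · rw [min_eq_right (by rw [le_div_iff₀ ht]; nlinarith), le_div_iff₀ hd]; nlinarith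
    · rw [min_eq_left (by rw [div_le_iff₀ ht]; nlinarith), div_le_div_iff₀ ht hd]
      nlinarith
  · rcases le_total t 1 with h | h
    · rw [max_eq_left (by rw [le_div_iff₀ ht]; nlinarith), div_le_div_iff₀ hd ht]
      nlinarith
    · rw [max_eq_right (by rw [div_le_iff₀ ht]; nlinarith), div_le_iff₀ hd]; nlinarith

theorem prevalence_decomposition (β γ θ π ρ : ℝ) (hρ : 0 < ρ)
    (hθ : θ ∈ Set.Ioo (0:ℝ) 1) (hπ : π ∈ Set.Ioo (0:ℝ) 1) :
    let f :=
      ρ * Real.exp (β + γ) * θ * π / (1 + ρ * Real.exp (β + γ)) +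
      ρ * Real.exp β * θ * (1 - π) / (1 + ρ * Real.exp β) +
      ρ * Real.exp γ * (1 - θ) * π / (1 + ρ * Real.exp γ) +
      ρ * (1 - θ) * (1 - π) / (1 + ρ)
    let C' :=
      (1 + ρ) * Real.exp (β + γ) * θ * π / (1 + ρ * Real.exp (β + γ)) +
      (1 + ρ) * Real.exp β * θ * (1 - π) / (1 + ρ * Real.exp β) +
      (1 + ρ) * Real.exp γ * (1 - θ) * π / (1 + ρ * Real.exp γ) +
      (1 - θ) * (1 - π)
    let C'' :=
      (1 + ρ) * θ * π / (1 + ρ * Real.exp (β + γ)) +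
      (1 + ρ) * θ * (1 - π) / (1 + ρ * Real.exp β) +
      (1 + ρ) * (1 - θ) * π / (1 + ρ * Real.exp γ) +
      (1 - θ) * (1 - π)
    f = ρ / (1 + ρ) * C' ∧
    1 - f = 1 / (1 + ρ) * C'' ∧
    min (min (Real.exp (β + γ)) (Real.exp β)) (min (Real.exp γ) 1) ≤ C' ∧
    C' ≤ max (max (Real.exp (β + γ)) (Real.exp β)) (max (Real.exp γ) 1) ∧
    min (min (Real.exp (-β - γ)) (Real.exp (-β))) (min (Real.exp (-γ)) 1) ≤ C'' ∧
    C'' ≤ max (max (Real.exp (-β - γ)) (Real.exp (-β))) (max (Real.exp (-γ)) 1) := by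
  obtain ⟨hθ0, hθ1⟩ := hθ
  obtain ⟨hπ0, hπ1⟩ := hπ
  set e1 := Real.exp (β + γ) with he1
  set e2 := Real.exp β with he2
  set e3 := Real.exp γ with he3
  have h1 : 0 < e1 := Real.exp_pos _
  have h2 : 0 < e2 := Real.exp_pos _
  have h3 : 0 < e3 := Real.exp_pos _
  have hd1 : 0 < 1 + ρ * e1 := by positivity
  have hd2 : 0 < 1 + ρ * e2 := by positivity
  have hd3 : 0 < 1 + ρ * e3 := by positivity
  have hd4 : 0 < 1 + ρ := by positivity
  have hi1 : Real.exp (-β - γ) = 1 / e1 := by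
    rw [show -β - γ = -(β + γ) by ring, Real.exp_neg, one_div, he1]
  have hi2 : Real.exp (-β) = 1 / e2 := by rw [Real.exp_neg, one_div, he2]
  have hi3 : Real.exp (-γ) = 1 / e3 := by rw [Real.exp_neg, one_div, he3]
  intro f C' C''
  have hp1 : (0:ℝ) ≤ θ * π := by positivity
  have hp2 : (0:ℝ) ≤ θ * (1 - π) := by nlinarith
  have hp3 : (0:ℝ) ≤ (1 - θ) * π := by nlinarith
  have hp4 : (0:ℝ) ≤ (1 - θ) * (1 - π) := by nlinarith
  have hC'eq : C' = ((1 + ρ) * e1 / (1 + ρ * e1)) * (θ * π)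
      + ((1 + ρ) * e2 / (1 + ρ * e2)) * (θ * (1 - π))
      + ((1 + ρ) * e3 / (1 + ρ * e3)) * ((1 - θ) * π)
      + (1 - θ) * (1 - π) := by
    simp only [C']; ring
  have hC''eq : C'' = ((1 + ρ) / (1 + ρ * e1)) * (θ * π)
      + ((1 + ρ) / (1 + ρ * e2)) * (θ * (1 - π))
      + ((1 + ρ) / (1 + ρ * e3)) * ((1 - θ) * π)
      + (1 - θ) * (1 - π) := by
    simp only [C'']; ring
  have r1 := ratio_bounds ρ e1 hρ h1
  have r2 := ratio_bounds ρ e2 hρ h2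
  have r3 := ratio_bounds ρ e3 hρ h3
  have s1 := ratio_bounds' ρ e1 hρ h1
  have s2 := ratio_bounds' ρ e2 hρ h2
  have s3 := ratio_bounds' ρ e3 hρ h3
  refine ⟨?_, ?_, ?_, ?_, ?_, ?_⟩
  · simp only [f, C']
    field_simp
  · simp only [f, C'']
    field_simp
    ring
  · set m := min (min e1 e2) (min e3 1) with hm
    have hme1 : m ≤ min e1 1 := le_min ((min_le_left _ _).trans (min_le_left _ _))
      ((min_le_right _ _).trans (min_le_right _ _))
    have hme2 : m ≤ min e2 1 := le_min ((min_le_left _ _).trans (min_le_right _ _))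
      ((min_le_right _ _).trans (min_le_right _ _))
    have hme3 : m ≤ min e3 1 := le_min ((min_le_right _ _).trans (min_le_left _ _))
      ((min_le_right _ _).trans (min_le_right _ _))
    have hm1 : m ≤ 1 := (min_le_right _ _).trans (min_le_right _ _)
    have hsum : m * (θ * π) + m * (θ * (1 - π)) + m * ((1 - θ) * π)
        + m * ((1 - θ) * (1 - π)) = m := by ring
    rw [hC'eq]
    linarith [mul_le_mul_of_nonneg_right (hme1.trans r1.1) hp1,
      mul_le_mul_of_nonneg_right (hme2.trans r2.1) hp2,
      mul_le_mul_of_nonneg_right (hme3.trans r3.1) hp3,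
      mul_le_mul_of_nonneg_right hm1 hp4]
  · set M := max (max e1 e2) (max e3 1) with hM
    have hMe1 : max e1 1 ≤ M := max_le ((le_max_left _ _).trans (le_max_left _ _))
      ((le_max_right _ _).trans (le_max_right _ _))
    have hMe2 : max e2 1 ≤ M := max_le ((le_max_right _ _).trans (le_max_left _ _))
      ((le_max_right _ _).trans (le_max_right _ _))
    have hMe3 : max e3 1 ≤ M := max_le ((le_max_left _ _).trans (le_max_right _ _))
      ((le_max_right _ _).trans (le_max_right _ _))
    have hM1 : (1:ℝ) ≤ M := (le_max_right _ _).trans (le_max_right _ _)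
    have hsum : M * (θ * π) + M * (θ * (1 - π)) + M * ((1 - θ) * π)
        + M * ((1 - θ) * (1 - π)) = M := by ring
    rw [hC'eq]
    linarith [mul_le_mul_of_nonneg_right (r1.2.trans hMe1) hp1,
      mul_le_mul_of_nonneg_right (r2.2.trans hMe2) hp2,
      mul_le_mul_of_nonneg_right (r3.2.trans hMe3) hp3,
      mul_le_mul_of_nonneg_right hM1 hp4]
  · rw [hi1, hi2, hi3]
    set m := min (min (1/e1) (1/e2)) (min (1/e3) 1) with hm
    have hme1 : m ≤ min (1/e1) 1 := le_min ((min_le_left _ _).trans (min_le_left _ _))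
      ((min_le_right _ _).trans (min_le_right _ _))
    have hme2 : m ≤ min (1/e2) 1 := le_min ((min_le_left _ _).trans (min_le_right _ _))
      ((min_le_right _ _).trans (min_le_right _ _))
    have hme3 : m ≤ min (1/e3) 1 := le_min ((min_le_right _ _).trans (min_le_left _ _))
      ((min_le_right _ _).trans (min_le_right _ _))
    have hm1 : m ≤ 1 := (min_le_right _ _).trans (min_le_right _ _)
    have hsum : m * (θ * π) + m * (θ * (1 - π)) + m * ((1 - θ) * π)
        + m * ((1 - θ) * (1 - π)) = m := by ring
    rw [hC''eq]
    linarith [mul_le_mul_of_nonneg_right (hme1.trans s1.1) hp1,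
      mul_le_mul_of_nonneg_right (hme2.trans s2.1) hp2,
      mul_le_mul_of_nonneg_right (hme3.trans s3.1) hp3,
      mul_le_mul_of_nonneg_right hm1 hp4]
  · rw [hi1, hi2, hi3]
    set M := max (max (1/e1) (1/e2)) (max (1/e3) 1) with hM
    have hMe1 : max (1/e1) 1 ≤ M := max_le ((le_max_left _ _).trans (le_max_left _ _))
      ((le_max_right _ _).trans (le_max_right _ _))
    have hMe2 : max (1/e2) 1 ≤ M := max_le ((le_max_right _ _).trans (le_max_left _ _))
      ((le_max_right _ _).trans (le_max_right _ _))
    have hMe3 : max (1/e3) 1 ≤ M := max_le ((le_max_left _ _).trans (le_max_right _ _))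
      ((le_max_right _ _).trans (le_max_right _ _))
    have hM1 : (1:ℝ) ≤ M := (le_max_right _ _).trans (le_max_right _ _)
    have hsum : M * (θ * π) + M * (θ * (1 - π)) + M * ((1 - θ) * π)
        + M * ((1 - θ) * (1 - π)) = M := by ring
    rw [hC''eq]
    linarith [mul_le_mul_of_nonneg_right (s1.2.trans hMe1) hp1,
      mul_le_mul_of_nonneg_right (s2.2.trans hMe2) hp2,
      mul_le_mul_of_nonneg_right (s3.2.trans hMe3) hp3,
      mul_le_mul_of_nonneg_right hM1 hp4]
end

section
/- For β ∈ ℝ, θ ∈ (0,1), with b₂ = e^β/(e^βθ+1−θ), λ₀ = 1 + [νθ(1−θ)/(1+ν)](1−e^β)²/((1−θ+e^βθ)²+νe^β) and g(ρ)² = (1 − 2(b₁−b₂)ρ + O(ρ²)) where b₁ = e^β(1−θ)+θ, the product satisfies g(ρ)²·λ(ρ) = λ₀ + O(ρ) as ρ → 0⁺, whenever λ(ρ) = λ₀ + O(ρ). In particular, the rare-outcome Pitman efficiency e_P(T_M,T_A) = λ₀ + O(ρ) is at least 1 − O(ρ), and strictly exceeds 1 in the limit when β ≠ 0. -/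
/-!
The attenuation factor `g` is a ratio of two quadratics in `ρ` that both equal `1` at `ρ = 0`, so
it is differentiable there and `g ρ ^ 2 = 1 + O(ρ)`. Writing
`g² λ - λ₀ = g² (λ - λ₀) + λ₀ (g² - 1)` gives `g² λ = λ₀ + O(ρ)`. Finally `λ₀ - 1` is a positive
multiple of `(1 - e^β)²`, hence nonnegative and positive exactly when `β ≠ 0`.
-/

open Filter Asymptotics Topology

theorem Asymptotics.IsBigO.mul_sub_const {α 𝕜 : Type*} [NormedField 𝕜]
    {l : Filter α} {h u f : α → 𝕜} {c : 𝕜}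
    (hh : h =O[l] (fun _ => (1 : 𝕜))) (hh₁ : (fun x => h x - 1) =O[l] f)
    (hu : (fun x => u x - c) =O[l] f) :
    (fun x => h x * u x - c) =O[l] f := by
  have hmul : (fun x => h x * (u x - c)) =O[l] f := by simpa using hh.mul hu
  exact (hmul.add (hh₁.const_mul_left c)).congr_left fun x => by ring

theorem DifferentiableAt.isBigO_mul_sub_const {𝕜 : Type*} [NontriviallyNormedField 𝕜]
    {h u : 𝕜 → 𝕜} {x₀ c : 𝕜} {l : Filter 𝕜} (hl : l ≤ 𝓝 x₀)
    (hd : DifferentiableAt 𝕜 h x₀) (h₀ : h x₀ = 1)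
    (hu : (fun x => u x - c) =O[l] (· - x₀)) :
    (fun x => h x * u x - c) =O[l] (· - x₀) := by
  have hbdd : h =O[l] (fun _ => (1 : 𝕜)) :=
    (h₀ ▸ hd.continuousAt.tendsto.mono_left hl).isBigO_one 𝕜
  have hsub : (fun x => h x - 1) =O[l] (· - x₀) := h₀ ▸ hd.isBigO_sub.mono hl
  exact hbdd.mul_sub_const hsub hu

theorem differentiableAt_zero_quadratic_div_quadratic (a b c : ℝ) :
    DifferentiableAt ℝ (fun ρ => (a * ρ ^ 2 + b * ρ + 1) / (a * ρ ^ 2 + c * ρ + 1)) 0 := by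
  fun_prop (disch := norm_num)

theorem pitman_excess_pos {ν θ x : ℝ} (hν : 0 < ν) (hθ : θ ∈ Set.Ioo (0 : ℝ) 1) (hx : 0 < x)
    (hx₁ : x ≠ 1) :
    0 < ν * θ * (1 - θ) / (1 + ν) * ((1 - x) ^ 2 / ((1 - θ + x * θ) ^ 2 + ν * x)) := by
  obtain ⟨hθ₀, hθ₁⟩ := hθ
  have hθ₁' : 0 < 1 - θ := sub_pos.2 hθ₁
  have hx₁' : 1 - x ≠ 0 := sub_ne_zero.2 hx₁.symm
  positivity

theorem pitman_rare_outcome (ν θ β : ℝ) (hν : 0 < ν) (hθ : θ ∈ Set.Ioo (0:ℝ) 1)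
    (lam : ℝ → ℝ) :
    let b₁ := Real.exp β * (1 - θ) + θ
    let b₂ := Real.exp β / (Real.exp β * θ + 1 - θ)
    let g : ℝ → ℝ := fun ρ => (b₁ * b₂ * ρ ^ 2 + 2 * b₂ * ρ + 1) /
        (b₁ * b₂ * ρ ^ 2 + (b₁ + b₂) * ρ + 1)
    let lam0 := 1 + (ν * θ * (1 - θ) / (1 + ν)) *
        ((1 - Real.exp β) ^ 2 / ((1 - θ + Real.exp β * θ) ^ 2 + ν * Real.exp β))
    (fun ρ : ℝ => lam ρ - lam0) =O[nhdsWithin 0 (Set.Ioi 0)] (fun ρ : ℝ => ρ) →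
      ((fun ρ : ℝ => (g ρ) ^ 2 * lam ρ - lam0) =O[nhdsWithin 0 (Set.Ioi 0)]
          (fun ρ : ℝ => ρ) ∧
        lam0 ≥ 1 ∧ (β ≠ 0 → lam0 > 1)) := by
  intro b₁ b₂ g lam0 hlam
  have hg : DifferentiableAt ℝ (fun ρ => g ρ ^ 2) 0 :=
    (differentiableAt_zero_quadratic_div_quadratic _ _ _).pow 2
  have hlam0_gt_one (hβ : β ≠ 0) : 1 < lam0 :=
    lt_add_of_pos_right 1 <| pitman_excess_pos hν hθ (Real.exp_pos β) (by simpa using hβ)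
  refine ⟨?_, ?_, hlam0_gt_one⟩
  · simpa using hg.isBigO_mul_sub_const nhdsWithin_le_nhds (by simp [g]) (by simpa using hlam)
  · rcases eq_or_ne β 0 with rfl | hβ
    · simp [lam0]
    · exact (hlam0_gt_one hβ).le
end
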